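/- Let P and P̄ be two distributions of (X,Y) on 𝒳×{0,1} having the same marginal μ_X, both satisfying the margin condition with exponent α>0 and constant C_M>0, with regression functions η and η̄ respectively. Then the corresponding decision rules f_η(x)=1{η(x)≥1/2} and f_{η̄}(x)=1{η̄(x)≥1/2} satisfy ‖f_{η̄} − f_η‖_{L¹(μ_X)} ≤ 2C_M · ‖η̄ − η‖_{L^∞(μ_X)}^α. -/

import Mathlib

/-!
If the two plug-in rules disagree at `x`, then `1/2` lies between `η x` and `η' x`, so one of
them is at distance in `(0, |η' x - η x|]` from `1/2`. Hence, off a null set, the disagreement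
set lies in the union of the margin bands of width `ε = ‖η' - η‖_∞` of `η` and of `η'`, each of
which has measure at most `C ε^α` by the margin condition.
-/

open MeasureTheory Set
open scoped ENNReal

noncomputable section

/-- The margin condition with exponent `α` and constant `C`:
`μ_X(0 < |η(X) - 1/2| ≤ t) ≤ C t^α` for all `0 ≤ t < 1`. -/
def MarginCond {𝒳 : Type*} [MeasurableSpace 𝒳] (μ : Measure 𝒳) (η : 𝒳 → ℝ) (α C : ℝ) : Prop :=
  ∀ t : ℝ, 0 ≤ t → t < 1 →
    (μ {x | 0 < |η x - 1/2| ∧ |η x - 1/2| ≤ t}).toReal ≤ C * t ^ α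

/-- The plug-in (Bayes) rule `x ↦ 1{η(x) ≥ 1/2}` associated with a function `η`. -/
def bayes {𝒳 : Type*} (η : 𝒳 → ℝ) : 𝒳 → Bool := fun x => decide ((1:ℝ)/2 ≤ η x)

/-- `η` is the regression function of the joint distribution `P` of `(X,Y)` on `𝒳 × {0,1}`:
`η` is Borel with values in `[0,1]` and `P(A × {1}) = ∫_A η dμ_X` for every measurable `A`,
where `μ_X = P ∘ (proj₁)⁻¹` is the marginal of `X`. -/
def IsRegFun {𝒳 : Type*} [MeasurableSpace 𝒳] (P : Measure (𝒳 × Bool)) (η : 𝒳 → ℝ) : Prop :=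
  Measurable η ∧ (∀ x, η x ∈ Icc (0:ℝ) 1) ∧
    ∀ A : Set 𝒳, MeasurableSet A →
      P (A ×ˢ ({true} : Set Bool)) = ∫⁻ x in A, ENNReal.ofReal (η x) ∂(P.map Prod.fst)

/-- Classification error `R(f) = P(Y ≠ f(X))` of a prediction rule `f`. -/
def risk {𝒳 : Type*} [MeasurableSpace 𝒳] (P : Measure (𝒳 × Bool)) (f : 𝒳 → Bool) : ℝ :=
  (P {p : 𝒳 × Bool | p.2 ≠ f p.1}).toReal

/-- Real-valued indicator of a prediction rule. -/
def bInd {𝒳 : Type*} (f : 𝒳 → Bool) (x : 𝒳) : ℝ := if f x then 1 else 0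

/-- `L¹(μ)`-distance `‖f - g‖_{L¹(μ)}` between two prediction rules. -/
def distL1 {𝒳 : Type*} [MeasurableSpace 𝒳] (μ : Measure 𝒳) (f g : 𝒳 → Bool) : ℝ :=
  ∫ x, |bInd f x - bInd g x| ∂μ

section

variable {𝒳 : Type*}

def marginBand (η : 𝒳 → ℝ) (t : ℝ) : Set 𝒳 := {x | 0 < |η x - 1/2| ∧ |η x - 1/2| ≤ t}

lemma marginBand_eq_min_half {η : 𝒳 → ℝ} (hη01 : ∀ x, η x ∈ Icc (0:ℝ) 1) (t : ℝ) :
    marginBand η t = marginBand η (min t (1/2)) := by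
  ext x
  have hhalf : |η x - 1/2| ≤ 1/2 := abs_le.2 ⟨by linarith [(hη01 x).1], by linarith [(hη01 x).2]⟩
  simp only [marginBand, mem_ofPred_eq, le_min_iff, hhalf, and_true]

lemma abs_sub_half_pos_le_of_lt_half_le {a b : ℝ} (ha : a < 1/2) (hb : 1/2 ≤ b) :
    0 < |a - 1/2| ∧ |a - 1/2| ≤ |b - a| := by
  rw [abs_of_neg (by linarith), abs_of_nonneg (by linarith)]
  constructor <;> linarith

lemma mem_marginBand_union_of_bayes_ne {η η' : 𝒳 → ℝ} {x : 𝒳} {ε : ℝ}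
    (hx : |η' x - η x| ≤ ε) (hne : bayes η' x ≠ bayes η x) :
    x ∈ marginBand η ε ∪ marginBand η' ε := by
  simp only [bayes, ne_eq, decide_eq_decide] at hne
  by_cases h : (1:ℝ)/2 ≤ η x
  · have h' : η' x < 1/2 := not_le.1 fun h' => hne ⟨fun _ => h, fun _ => h'⟩
    obtain ⟨hpos, hle⟩ := abs_sub_half_pos_le_of_lt_half_le h' h
    exact Or.inr ⟨hpos, hle.trans (abs_sub_comm (η' x) (η x) ▸ hx)⟩
  · have h' : 1/2 ≤ η' x := by tauto
    obtain ⟨hpos, hle⟩ := abs_sub_half_pos_le_of_lt_half_le (not_le.1 h) h'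
    exact Or.inl ⟨hpos, hle.trans hx⟩

lemma abs_bInd_sub_bInd (f g : 𝒳 → Bool) :
    (fun x => |bInd f x - bInd g x|) = {x | f x ≠ g x}.indicator 1 := by
  ext x
  by_cases h : f x = g x
  · simp [bInd, h]
  · cases hf : f x <;> cases hg : g x <;> simp_all [bInd]

variable [MeasurableSpace 𝒳]

/-- The bands of a `[0,1]`-valued `η` stop growing at `t = 1/2`, so no `t < 1` is needed. -/
lemma MarginCond.measureReal_marginBand_le {μ : Measure 𝒳} {η : 𝒳 → ℝ} {α C : ℝ}
    (hmargin : MarginCond μ η α C) (hη01 : ∀ x, η x ∈ Icc (0:ℝ) 1) (hα : 0 ≤ α) (hC : 0 ≤ C)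
    {t : ℝ} (ht : 0 ≤ t) :
    μ.real (marginBand η t) ≤ C * t ^ α :=
  calc μ.real (marginBand η t) = μ.real (marginBand η (min t (1/2))) := by
        rw [← marginBand_eq_min_half hη01]
    _ ≤ C * (min t (1/2)) ^ α :=
        hmargin _ (le_min ht (by norm_num)) (by linarith [min_le_right t (1/2)])
    _ ≤ C * t ^ α := by gcongr; exact min_le_left _ _

lemma measurable_bayes {η : 𝒳 → ℝ} (hη : Measurable η) : Measurable (bayes η) :=
  measurable_to_bool <| by
    simpa [bayes, preimage, decide_eq_true_eq] using measurableSet_le measurable_const hη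

lemma distL1_eq_measureReal_ne (μ : Measure 𝒳) {f g : 𝒳 → Bool} (hf : Measurable f)
    (hg : Measurable g) :
    distL1 μ f g = μ.real {x | f x ≠ g x} := by
  rw [distL1, abs_bInd_sub_bInd]
  exact integral_indicator_one (measurableSet_eq_fun hf hg).compl

lemma measureReal_bayes_ne_le (μ : Measure 𝒳) [IsFiniteMeasure μ] {η η' : 𝒳 → ℝ} {ε : ℝ}
    (hε : ∀ᵐ x ∂μ, |η' x - η x| ≤ ε) :
    μ.real {x | bayes η' x ≠ bayes η x} ≤ μ.real (marginBand η ε) + μ.real (marginBand η' ε) :=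
  calc μ.real {x | bayes η' x ≠ bayes η x} ≤ μ.real (marginBand η ε ∪ marginBand η' ε) :=
        ENNReal.toReal_mono (measure_ne_top _ _) <| measure_mono_ae <| by
          filter_upwards [hε] with x hx using mem_marginBand_union_of_bayes_ne hx
    _ ≤ _ := measureReal_union_le _ _

end

/-- If two distributions of `(X,Y)` have the same marginal `μ_X` and both satisfy the margin
condition with exponent `α` and constant `C_M`, then their decision rules satisfy
`‖f_{η̄} - f_η‖_{L¹(μ_X)} ≤ 2 C_M ‖η̄ - η‖_{L^∞(μ_X)}^α`. -/
theorem statement7 {𝒳 : Type*} [MeasurableSpace 𝒳]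
    (μ : Measure 𝒳) [IsProbabilityMeasure μ]
    (η η' : 𝒳 → ℝ) (hη : Measurable η) (hη01 : ∀ x, η x ∈ Icc (0:ℝ) 1)
    (hη' : Measurable η') (hη'01 : ∀ x, η' x ∈ Icc (0:ℝ) 1)
    (α C : ℝ) (hα : 0 < α) (hC : 0 < C)
    (hmargin : MarginCond μ η α C) (hmargin' : MarginCond μ η' α C) :
    distL1 μ (bayes η') (bayes η)
      ≤ 2 * C * ((eLpNorm (fun x => η' x - η x) ⊤ μ).toReal) ^ α := by
  have hdiff : MemLp (fun x => η' x - η x) ⊤ μ :=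
    memLp_top_of_bound (hη'.sub hη).aestronglyMeasurable 1 <| .of_forall fun x => by
      rw [Real.norm_eq_abs, abs_le]
      constructor <;> linarith [(hη01 x).1, (hη01 x).2, (hη'01 x).1, (hη'01 x).2]
  rw [toReal_eLpNorm hdiff.aestronglyMeasurable]
  set ε := lpNorm (fun x => η' x - η x) ⊤ μ
  have hε : 0 ≤ ε := lpNorm_nonneg
  calc distL1 μ (bayes η') (bayes η) = μ.real {x | bayes η' x ≠ bayes η x} :=
        distL1_eq_measureReal_ne μ (measurable_bayes hη') (measurable_bayes hη)
    _ ≤ μ.real (marginBand η ε) + μ.real (marginBand η' ε) :=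
        measureReal_bayes_ne_le μ (ae_le_lpNorm_exponent_top hdiff)
    _ ≤ C * ε ^ α + C * ε ^ α :=
        add_le_add (hmargin.measureReal_marginBand_le hη01 hα.le hC.le hε)
          (hmargin'.measureReal_marginBand_le hη'01 hα.le hC.le hε)
    _ = 2 * C * ε ^ α := by ring

end
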